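/- arXiv:1307.6208 — 2 statements merged into one kernel-verified Lean document; each statement's English description precedes it below -/
import Mathlib

section
/- Let r, t be sequences of nonzero reals and s a sequence with s₀ ≠ 0. Define c₀(r,s,t;Δ) = { x : ℕ → ℝ | (1/r_n) ∑_{k=0}^{n} s_{n-k} t_k (x_k − x_{k−1}) → 0 } with norm ‖x‖ = sup_n |(1/r_n) ∑_{k=0}^{n} s_{n-k} t_k (x_k − x_{k−1})|. Then c₀(r,s,t;Δ) is linearly isometrically isomorphic to c₀, the space of null sequences with the sup norm. -/
/-!
The map factors as `T = A ∘ Δ`, where `A` is the lower-triangular matrix with entries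
`s (n - k) * t k / r n`, whose diagonal `s 0 * t n / r n` never vanishes. Both `Δ` (inverted by
partial sums) and `A` (inverted by forward substitution) are linear bijections of `ℕ → ℝ`, so `T`
is a linear bijection from `c₀(r,s,t;Δ) = T⁻¹(c₀)` onto `c₀`, and the norm of `c₀(r,s,t;Δ)` is
the sup norm of `T x` by definition.
-/

open Finset

section LowerTriangular

def lowerTriangularMap {R : Type*} [CommSemiring R] (a : ℕ → ℕ → R) : (ℕ → R) →ₗ[R] (ℕ → R) where
  toFun y n := ∑ k ∈ range (n + 1), a n k * y k
  map_add' y z := by ext n; simp only [Pi.add_apply, mul_add, sum_add_distrib]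
  map_smul' c y := by
    ext n
    simp only [Pi.smul_apply, smul_eq_mul, RingHom.id_apply, mul_sum, mul_left_comm]

variable {R : Type*} [Field R]

noncomputable def lowerTriangularSolve (a : ℕ → ℕ → R) (b : ℕ → R) : ℕ → R
  | n => (a n n)⁻¹ * (b n - ∑ k : Fin n, a n k * lowerTriangularSolve a b k)

lemma lowerTriangularSolve_eq (a : ℕ → ℕ → R) (b : ℕ → R) (n : ℕ) :
    lowerTriangularSolve a b n =
      (a n n)⁻¹ * (b n - ∑ k ∈ range n, a n k * lowerTriangularSolve a b k) := by
  rw [lowerTriangularSolve, Fin.sum_univ_eq_sum_range (fun k => a n k * lowerTriangularSolve a b k)]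

variable {a : ℕ → ℕ → R}

lemma lowerTriangularMap_apply (y : ℕ → R) (n : ℕ) :
    lowerTriangularMap a y n = ∑ k ∈ range n, a n k * y k + a n n * y n := by
  rw [lowerTriangularMap, LinearMap.coe_mk, AddHom.coe_mk, sum_range_succ]

lemma lowerTriangularMap_lowerTriangularSolve (ha : ∀ n, a n n ≠ 0) (b : ℕ → R) :
    lowerTriangularMap a (lowerTriangularSolve a b) = b := by
  ext n
  rw [lowerTriangularMap_apply, lowerTriangularSolve_eq a b n, mul_inv_cancel_left₀ (ha n)]
  abel

lemma injective_lowerTriangularMap (ha : ∀ n, a n n ≠ 0) :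
    Function.Injective (lowerTriangularMap a) := by
  intro y z h
  funext n
  induction n using Nat.strong_induction_on with
  | _ n ih =>
    have hn := congrFun h n
    rw [lowerTriangularMap_apply, lowerTriangularMap_apply,
      sum_congr rfl fun k hk => by rw [ih k (mem_range.mp hk)]] at hn
    exact mul_left_cancel₀ (ha n) (add_left_cancel hn)

theorem bijective_lowerTriangularMap (ha : ∀ n, a n n ≠ 0) :
    Function.Bijective (lowerTriangularMap a) :=
  ⟨injective_lowerTriangularMap ha,
    fun b => ⟨_, lowerTriangularMap_lowerTriangularSolve ha b⟩⟩

end LowerTriangular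

section BackwardDiff

variable {R : Type*} [Ring R]

def backwardDiff : (ℕ → R) →ₗ[R] (ℕ → R) where
  toFun x k := x k - if k = 0 then 0 else x (k - 1)
  map_add' x y := by
    ext k
    by_cases hk : k = 0 <;> simp only [hk, if_true, if_false, Pi.add_apply] <;> abel
  map_smul' c x := by ext k; by_cases hk : k = 0 <;> simp [hk, mul_sub]

def partialSums (u : ℕ → R) (n : ℕ) : R := ∑ k ∈ range (n + 1), u k

lemma partialSums_backwardDiff (x : ℕ → R) : partialSums (backwardDiff x) = x := by
  funext n
  induction n with
  | zero => simp [partialSums, backwardDiff]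
  | succ n ih =>
    rw [partialSums, sum_range_succ, ← partialSums, ih]
    simp [backwardDiff]

lemma backwardDiff_partialSums (u : ℕ → R) : backwardDiff (partialSums u) = u := by
  funext n
  cases n with
  | zero => simp [partialSums, backwardDiff]
  | succ n => simp [partialSums, backwardDiff, sum_range_succ _ (n + 1)]

theorem bijective_backwardDiff : Function.Bijective (backwardDiff : (ℕ → R) →ₗ[R] (ℕ → R)) :=
  Function.bijective_iff_has_inverse.mpr
    ⟨partialSums, partialSums_backwardDiff, backwardDiff_partialSums⟩

end BackwardDiff

/-- The map `T = A(r,s,t)·Δ` is a linear isometric isomorphism from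
`c₀(r,s,t;Δ)` onto `c₀`. -/
theorem stmt_5 (r s t : ℕ → ℝ) (hr : ∀ n, r n ≠ 0) (ht : ∀ n, t n ≠ 0)
    (hs : s 0 ≠ 0) :
    let T : (ℕ → ℝ) → ℕ → ℝ := fun x n =>
      (1 / r n) * ∑ k ∈ Finset.range (n + 1),
        s (n - k) * t k * (x k - if k = 0 then 0 else x (k - 1))
    let X0 : Set (ℕ → ℝ) := {x | Filter.Tendsto (T x) Filter.atTop (nhds 0)}
    let C0 : Set (ℕ → ℝ) := {y | Filter.Tendsto y Filter.atTop (nhds 0)}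
    let N : (ℕ → ℝ) → ℝ := fun x => ⨆ n, |T x n|
    let Ny : (ℕ → ℝ) → ℝ := fun y => ⨆ n, |y n|
    (∀ x y : ℕ → ℝ, T (x + y) = T x + T y) ∧
    (∀ (c : ℝ) (x : ℕ → ℝ), T (c • x) = c • T x) ∧
    (∀ x ∈ X0, T x ∈ C0) ∧
    (∀ x y : ℕ → ℝ, T x = T y → x = y) ∧
    (∀ y ∈ C0, ∃ x ∈ X0, T x = y) ∧
    (∀ x ∈ X0, N x = Ny (T x)) := by
  intro T X0 C0 N Ny
  let A := lowerTriangularMap fun n k => 1 / r n * (s (n - k) * t k)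
  have hT : T = A ∘ₗ backwardDiff := by
    ext x n
    simp only [T, A, lowerTriangularMap, backwardDiff, LinearMap.coe_comp, LinearMap.coe_mk,
      AddHom.coe_mk, Function.comp_apply, mul_sum, mul_assoc]
  have hbij : Function.Bijective T := by
    rw [hT]
    refine (bijective_lowerTriangularMap fun n => ?_).comp bijective_backwardDiff
    simp [hr n, hs, ht n]
  refine ⟨fun x y => by rw [hT, map_add], fun c x => by rw [hT, map_smul],
    fun x hx => hx, fun x y => (hbij.1 ·), fun y hy => ?_, fun x _ => rfl⟩
  obtain ⟨x, rfl⟩ := hbij.2 y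
  exact ⟨x, hy, rfl⟩
end

section
/- Let A = (a_{nk}) be an infinite real matrix. Then A maps ℓ∞ into c if and only if sup_n ∑_{k=0}^{∞} |a_{nk}| < ∞, lim_{n→∞} a_{nk} =: α_k exists for each k, and lim_{n→∞} ∑_{k=0}^{∞} |a_{nk} − α_k| = 0. -/
/-!
Sufficiency: `|∑' k, (a n k - α k) * x k| ≤ (∑' k, |a n k - α k|) * sup |x|`.

Necessity rests on Schur's lemma: if `∑' k, d n k * x k → 0` for every `x` with `|x| ≤ 1`, then
`∑' k, |d n k| → 0`. Otherwise a gliding hump argument picks rows `n i` whose mass `≥ ε` is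
concentrated, up to `ε / 4`, on disjoint blocks `[K i, K (i + 1))`, and the `x` equal to the sign of
row `n i` on the `i`-th block keeps `∑' k, d (n i) k * x k ≥ ε / 2`. Applied to differences of
rows, Schur's lemma makes the rows a Cauchy sequence in `ℓ¹`; their limit is the `α` sought.
-/

open Filter Finset Topology

section BoundedMultiplier

variable {ι : Type*} {r x : ι → ℝ} {C : ℝ}

lemma abs_mul_le_abs_mul_of_abs_le {s y : ℝ} (hy : |y| ≤ C) : |s * y| ≤ |s| * C := by
  rw [abs_mul]
  exact mul_le_mul_of_nonneg_left hy (abs_nonneg s)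

lemma summable_mul_of_abs_le (hr : Summable fun k => |r k|) (hx : ∀ k, |x k| ≤ C) :
    Summable fun k => r k * x k :=
  (hr.mul_right C).of_norm_bounded fun k => abs_mul_le_abs_mul_of_abs_le (hx k)

lemma abs_tsum_mul_le (hr : Summable fun k => |r k|) (hx : ∀ k, |x k| ≤ C) :
    |∑' k, r k * x k| ≤ (∑' k, |r k|) * C :=
  tsum_of_norm_bounded (f := fun k => r k * x k) (hr.hasSum.mul_right C) fun k =>
    abs_mul_le_abs_mul_of_abs_le (hx k)

lemma tsum_mul_single [DecidableEq ι] (f : ι → ℝ) (i : ι) :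
    ∑' k, f k * (Pi.single i 1 : ι → ℝ) k = f i := by
  simp only [Pi.single_apply, mul_ite, mul_one, mul_zero]
  exact tsum_ite_eq i f

lemma abs_single_one_le_one [DecidableEq ι] (i k : ι) : |(Pi.single i 1 : ι → ℝ) k| ≤ 1 := by
  rcases eq_or_ne k i with rfl | hk <;> simp [*]

lemma abs_sign_le_one (s : ℝ) : |(SignType.sign s : ℝ)| ≤ 1 := by
  rcases SignType.sign s with _ | _ | _ <;> simp

end BoundedMultiplier

lemma tsum_abs_sub_le_tsum_mul {r x : ℕ → ℝ} (hr : Summable fun k => |r k|)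
    (hx : ∀ k, |x k| ≤ 1) {a b : ℕ} (hab : a ≤ b) (hsign : ∀ k ∈ Ico a b, r k * x k = |r k|) :
    ∑' k, |r k| - 2 * (∑ k ∈ range a, |r k| + ∑' k, |r (k + b)|) ≤ ∑' k, r k * x k := by
  set g : ℕ → ℝ := fun k => |r k| - r k * x k
  have hrx : Summable fun k => r k * x k := summable_mul_of_abs_le hr hx
  have hg_le : ∀ k, g k ≤ 2 * |r k| := fun k => by
    have := neg_abs_le (r k * x k)
    have := abs_mul_le_abs_mul_of_abs_le (s := r k) (hx k)
    simp only [g]; linarith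
  have hg_summable : Summable g := hr.sub hrx
  have hg_tail : Summable fun k => g (k + b) := (summable_nat_add_iff b).2 hg_summable
  have hg_hump : ∑ k ∈ Ico a b, g k = 0 :=
    sum_eq_zero fun k hk => sub_eq_zero.2 (hsign k hk).symm
  calc ∑' k, |r k| - 2 * (∑ k ∈ range a, |r k| + ∑' k, |r (k + b)|)
      ≤ ∑' k, |r k| - (∑ k ∈ range a, g k + ∑' k, g (k + b)) := by
        have hhead : ∑ k ∈ range a, g k ≤ 2 * ∑ k ∈ range a, |r k| := by
          rw [mul_sum]; exact sum_le_sum fun k _ => hg_le k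
        have htail : ∑' k, g (k + b) ≤ 2 * ∑' k, |r (k + b)| := by
          rw [← tsum_mul_left]
          exact hg_tail.tsum_le_tsum (fun k => hg_le _) (((summable_nat_add_iff b).2 hr).mul_left 2)
        linarith
    _ = ∑' k, |r k| - ∑' k, g k := by
        rw [← hg_summable.sum_add_tsum_nat_add b, ← sum_range_add_sum_Ico _ hab, hg_hump, add_zero]
    _ = ∑' k, r k * x k := by
        rw [hr.tsum_sub hrx]; ring

lemma StrictMono.findGreatest_le_eq {K : ℕ → ℕ} (hK : StrictMono K) {i k : ℕ}
    (hk : k ∈ Ico (K i) (K (i + 1))) : Nat.findGreatest (fun j => K j ≤ k) k = i := by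
  rw [mem_Ico] at hk
  refine Nat.findGreatest_eq_iff.2 ⟨(hK.id_le i).trans hk.1, fun _ => hk.1, fun j hij _ => ?_⟩
  exact (hk.2.trans_le (hK.monotone hij)).not_ge

lemma exists_sign_on_blocks (r : ℕ → ℕ → ℝ) {K : ℕ → ℕ} (hK : StrictMono K) :
    ∃ x : ℕ → ℝ, (∀ k, |x k| ≤ 1) ∧
      ∀ i, ∀ k ∈ Ico (K i) (K (i + 1)), r i k * x k = |r i k| := by
  refine ⟨fun k => SignType.sign (r (Nat.findGreatest (fun j => K j ≤ k) k) k),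
    fun k => abs_sign_le_one _, fun i k hk => ?_⟩
  dsimp only
  rw [hK.findGreatest_le_eq hk, self_mul_sign]

lemma exists_hump_row {d : ℕ → ℕ → ℝ} {ε δ : ℝ} (hδ : 0 < δ)
    (hcol : ∀ k, Tendsto (fun n => d n k) atTop (𝓝 0))
    (hbig : ∃ᶠ n in atTop, ε ≤ ∑' k, |d n k|) (p : ℕ × ℕ) :
    ∃ q : ℕ × ℕ, p.1 < q.1 ∧ p.2 < q.2 ∧ ∑ k ∈ range p.2, |d q.1 k| < δ ∧
      ε ≤ ∑' k, |d q.1 k| ∧ ∑' k, |d q.1 (k + q.2)| < δ := by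
  have hhead : Tendsto (fun n => ∑ k ∈ range p.2, |d n k|) atTop (𝓝 0) := by
    simpa using tendsto_finsetSum (range p.2) fun k _ => (hcol k).abs
  obtain ⟨n, hn_big, hn_head, hn_gt⟩ := (hbig.and_eventually
    ((hhead.eventually (gt_mem_nhds hδ)).and (eventually_gt_atTop p.1))).exists
  obtain ⟨K, hK_tail, hK_gt⟩ := (((tendsto_sum_nat_add fun k => |d n k|).eventually
    (gt_mem_nhds hδ)).and (eventually_gt_atTop p.2)).exists
  exact ⟨(n, K), hn_gt, hK_gt, hn_head, hn_big, hK_tail⟩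

theorem tendsto_tsum_abs_of_forall_tendsto_tsum_mul {d : ℕ → ℕ → ℝ}
    (hd : ∀ n, Summable fun k => |d n k|)
    (h : ∀ x : ℕ → ℝ, (∀ k, |x k| ≤ 1) → Tendsto (fun n => ∑' k, d n k * x k) atTop (𝓝 0)) :
    Tendsto (fun n => ∑' k, |d n k|) atTop (𝓝 0) := by
  have hcol : ∀ k, Tendsto (fun n => d n k) atTop (𝓝 0) := fun k => by
    simpa only [tsum_mul_single] using h _ (abs_single_one_le_one k)
  refine tendsto_order.2 ⟨fun b hb => Eventually.of_forall fun n =>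
    hb.trans_le (tsum_nonneg fun _ => abs_nonneg _), fun ε hε => ?_⟩
  by_contra hfreq
  simp only [not_eventually, not_lt] at hfreq
  choose next hnext using exists_hump_row (δ := ε / 8) (by positivity) hcol hfreq
  set seq : ℕ → ℕ × ℕ := fun i => next^[i] (0, 0)
  have hseq : ∀ i, seq (i + 1) = next (seq i) := fun i => Function.iterate_succ_apply' ..
  -- row `n i` has almost all its mass on the block `[K i, K (i + 1))`
  set n : ℕ → ℕ := fun i => (seq (i + 1)).1
  set K : ℕ → ℕ := fun i => (seq i).2
  have hn : StrictMono n := strictMono_nat_of_lt_succ fun i => by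
    simp only [n, hseq (i + 1)]; exact (hnext _).1
  have hK : StrictMono K := strictMono_nat_of_lt_succ fun i => by
    simp only [K, hseq i]; exact (hnext _).2.1
  obtain ⟨x, hx, hsign⟩ := exists_sign_on_blocks (fun i => d (n i)) hK
  have hlarge : ∀ i, ε / 2 ≤ ∑' k, d (n i) k * x k := fun i => by
    obtain ⟨-, -, hhead, hbig, htail⟩ := hnext (seq i)
    rw [← hseq] at hhead hbig htail
    have := tsum_abs_sub_le_tsum_mul (hd (n i)) hx (hK.monotone i.le_succ) (hsign i)
    linarith
  obtain ⟨i, hi⟩ :=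
    (((h x hx).comp hn.tendsto_atTop).eventually (gt_mem_nhds (half_pos hε))).exists
  exact (hlarge i).not_gt hi

section LpOne

variable {ι : Type*}

lemma memℓp_one_iff_summable_abs {f : ι → ℝ} : Memℓp f 1 ↔ Summable fun k => |f k| := by
  rw [memℓp_gen_iff (by simp)]
  simp

lemma lp.summable_abs_of_one (f : lp (fun _ : ι => ℝ) 1) : Summable fun k => |f k| :=
  memℓp_one_iff_summable_abs.1 (lp.memℓp f)

lemma lp.norm_eq_tsum_abs_of_one (f : lp (fun _ : ι => ℝ) 1) : ‖f‖ = ∑' k, |f k| := by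
  rw [lp.norm_eq_tsum_rpow (by simp)]
  simp

end LpOne

lemma cauchySeq_rows_of_forall_tendsto_tsum_mul {a : ℕ → ℕ → ℝ}
    (hrow : ∀ n, Summable fun k => |a n k|)
    (H : ∀ x : ℕ → ℝ, (∀ k, |x k| ≤ 1) → ∃ L, Tendsto (fun n => ∑' k, a n k * x k) atTop (𝓝 L)) :
    CauchySeq fun n =>
      (⟨a n, memℓp_one_iff_summable_abs.2 (hrow n)⟩ : lp (fun _ : ℕ => ℝ) 1) := by
  rw [cauchySeq_iff_tendsto_dist_atTop_0, tendsto_iff_seq_tendsto]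
  intro p hp
  rw [← prod_atTop_atTop_eq, tendsto_prod_iff'] at hp
  simp only [Function.comp_def, dist_eq_norm, lp.norm_eq_tsum_abs_of_one, lp.coeFn_sub,
    Pi.sub_apply]
  refine tendsto_tsum_abs_of_forall_tendsto_tsum_mul (fun j => ?_) fun x hx => ?_
  · exact ((hrow _).add (hrow _)).of_nonneg_of_le (fun _ => abs_nonneg _) fun _ => abs_sub _ _
  · obtain ⟨L, hL⟩ := H x hx
    have := (hL.comp hp.1).sub (hL.comp hp.2)
    rw [sub_self] at this
    refine this.congr fun j => ?_
    simp only [Function.comp_apply, sub_mul]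
    exact ((summable_mul_of_abs_le (hrow _) hx).tsum_sub (summable_mul_of_abs_le (hrow _) hx)).symm

lemma tendsto_tsum_mul_of_tendsto_tsum_abs_sub {a : ℕ → ℕ → ℝ} {α x : ℕ → ℝ} {C : ℝ}
    (hrow : ∀ n, Summable fun k => |a n k|) (hα : Summable fun k => |α k|)
    (hd : ∀ n, Summable fun k => |a n k - α k|)
    (hlim : Tendsto (fun n => ∑' k, |a n k - α k|) atTop (𝓝 0)) (hx : ∀ k, |x k| ≤ C) :
    Tendsto (fun n => ∑' k, a n k * x k) atTop (𝓝 (∑' k, α k * x k)) := by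
  rw [tendsto_iff_norm_sub_tendsto_zero]
  refine squeeze_zero (fun _ => norm_nonneg _) (fun n => ?_) (by simpa using hlim.mul_const C)
  rw [Real.norm_eq_abs, ← (summable_mul_of_abs_le (hrow n) hx).tsum_sub
    (summable_mul_of_abs_le hα hx)]
  simp only [← sub_mul]
  exact abs_tsum_mul_le (hd n) hx

/-- `A ∈ (ℓ∞, c)` iff `sup_n ∑_k |a_{nk}| < ∞`, `α_k = lim_n a_{nk}` exists for
each `k`, and `lim_n ∑_k |a_{nk} - α_k| = 0` (Schur's characterization). -/
theorem stmt_13 (a : ℕ → ℕ → ℝ) :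
    (∀ x : ℕ → ℝ, (∃ C, ∀ k, |x k| ≤ C) →
      (∀ n, Summable fun k => a n k * x k) ∧
      ∃ L, Filter.Tendsto (fun n => ∑' k, a n k * x k) Filter.atTop (nhds L)) ↔
    ((∀ n, Summable fun k => |a n k|) ∧
      (∃ C, ∀ n, (∑' k, |a n k|) ≤ C) ∧
      ∃ α : ℕ → ℝ,
        (∀ k, Filter.Tendsto (fun n => a n k) Filter.atTop (nhds (α k))) ∧
        (∀ n, Summable fun k => |a n k - α k|) ∧
        Filter.Tendsto (fun n => ∑' k, |a n k - α k|) Filter.atTop (nhds 0)) := by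
  constructor
  · intro H
    have hrow : ∀ n, Summable fun k => |a n k| := fun n => by
      simpa only [self_mul_sign] using (H _ ⟨1, fun k => abs_sign_le_one (a n k)⟩).1 n
    set u : ℕ → lp (fun _ : ℕ => ℝ) 1 := fun n => ⟨a n, memℓp_one_iff_summable_abs.2 (hrow n)⟩
    obtain ⟨β, hβ⟩ := cauchySeq_tendsto_of_complete
      (cauchySeq_rows_of_forall_tendsto_tsum_mul hrow fun x hx => (H x ⟨1, hx⟩).2)
    obtain ⟨C, hC⟩ := hβ.norm.bddAbove_range
    refine ⟨hrow, ⟨C, fun n => ?_⟩, β, fun k => ?_, fun n => lp.summable_abs_of_one (u n - β), ?_⟩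
    · rw [← lp.norm_eq_tsum_abs_of_one (u n)]
      exact hC ⟨n, rfl⟩
    · exact ((lp.lipschitzWith_one_eval 1 k).continuous.tendsto β).comp hβ
    · refine (tendsto_iff_norm_sub_tendsto_zero.1 hβ).congr fun n => ?_
      rw [lp.norm_eq_tsum_abs_of_one]
      rfl
  · rintro ⟨hrow, -, α, -, hd, hlim⟩ x ⟨C, hx⟩
    have hα : Summable fun k => |α k| :=
      ((hd 0).add (hrow 0)).of_nonneg_of_le (fun _ => abs_nonneg _) fun k => by
        simpa [abs_sub_comm] using abs_add_le (α k - a 0 k) (a 0 k)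
    exact ⟨fun n => summable_mul_of_abs_le (hrow n) hx, _,
      tendsto_tsum_mul_of_tendsto_tsum_abs_sub hrow hα hd hlim hx⟩
end
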